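/- arXiv:1205.1031 — 2 statements merged into one kernel-verified Lean document; each statement's English description precedes it below -/
import Mathlib

section
/- Let ρ₁,…,ρ_k be density operators of maximally entangled states on ℂᵈ⊗ℂᵈ, and let P₁,…,P_k be positive semidefinite operators with T_A(Pⱼ) positive semidefinite for each j and P₁+⋯+P_k = I. Then (1/k)·Σⱼ ⟨Pⱼ, ρⱼ⟩ ≤ d/k. In particular, if k > d, no PPT measurement distinguishes the states perfectly. -/
/-!
Partial transposition preserves the pairing `tr (X * Y)`, and it sends the projector onto a
maximally entangled vector `u = vec(Vᵀ)/√d` to `(1/d) W`, where `W` is the unitary `Vᴴ ⊗ V`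
followed by the swap of the two factors. For `M ⪰ 0` and `W` unitary, `Re tr (M W) ≤ tr M`
because `tr ((1 - W)ᴴ M (1 - W)) ≥ 0`. Hence `⟨Pⱼ, ρⱼ⟩ ≤ tr (T_A Pⱼ) / d = tr Pⱼ / d`, and
summing over `j` gives `tr 1 / d = d`.
-/

open Matrix
open scoped ComplexOrder

/-- Partial transpose on the first tensor factor. -/
def PT {d : ℕ} (X : Matrix (Fin d × Fin d) (Fin d × Fin d) ℂ) :
    Matrix (Fin d × Fin d) (Fin d × Fin d) ℂ :=
  fun p q => X (q.1, p.2) (p.1, q.2)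

/-- `u` is a maximally entangled unit vector of `ℂᵈ ⊗ ℂᵈ`. -/
def IsMaxEnt {d : ℕ} (u : Fin d × Fin d → ℂ) : Prop :=
  ∃ V ∈ Matrix.unitaryGroup (Fin d) ℂ,
    u = fun p => (1 / Real.sqrt d : ℂ) * V p.2 p.1

open scoped Kronecker

theorem Matrix.PosSemidef.re_trace_mul_le_of_mem_unitaryGroup {𝕜 n : Type*} [RCLike 𝕜]
    [Fintype n] [DecidableEq n] {M W : Matrix n n 𝕜} (hM : M.PosSemidef)
    (hW : W ∈ unitaryGroup n 𝕜) :
    RCLike.re (M * W).trace ≤ RCLike.re M.trace := by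
  have hnonneg := (hM.conjTranspose_mul_mul_same (1 - W)).trace_nonneg
  have hexpand : ((1 - W)ᴴ * M * (1 - W)).trace
      = M.trace + M.trace - (M * W).trace - star (M * W).trace := by
    have hcycle : (Wᴴ * M * W).trace = M.trace := by
      rw [trace_mul_cycle, ← star_eq_conjTranspose, mem_unitaryGroup_iff.mp hW, Matrix.one_mul]
    have hadj : (Wᴴ * M).trace = star (M * W).trace := by
      rw [← trace_conjTranspose, conjTranspose_mul, hM.isHermitian.eq]
    simp only [conjTranspose_sub, conjTranspose_one, Matrix.sub_mul, Matrix.mul_sub,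
      Matrix.one_mul, Matrix.mul_one, trace_sub, hcycle, hadj]
    ring
  rw [hexpand] at hnonneg
  have hre := (RCLike.nonneg_iff.mp hnonneg).1
  simp only [map_sub, map_add, RCLike.star_def, RCLike.conj_re] at hre
  linarith

theorem trace_PT_mul_PT {d : ℕ} (X Y : Matrix (Fin d × Fin d) (Fin d × Fin d) ℂ) :
    (PT X * PT Y).trace = (X * Y).trace := by
  simp only [trace, diag, mul_apply, PT, ← Fintype.sum_prod_type']
  exact Fintype.sum_equiv
    (Function.Involutive.toPerm
      (fun x : (Fin d × Fin d) × (Fin d × Fin d) => ((x.2.1, x.1.2), (x.1.1, x.2.2)))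
      fun _ => rfl)
    _ _ fun _ => rfl

theorem IsMaxEnt.exists_PT_vecMulVec_eq_smul_unitary {d : ℕ} {u : Fin d × Fin d → ℂ}
    (hu : IsMaxEnt u) :
    ∃ W ∈ unitaryGroup (Fin d × Fin d) ℂ, PT (vecMulVec u (star u)) = (d : ℝ)⁻¹ • W := by
  obtain ⟨V, hV, rfl⟩ := hu
  refine ⟨(Vᴴ ⊗ₖ V).submatrix id Prod.swap, ?_, ?_⟩
  · have hVV : Vᴴ ⊗ₖ V ∈ unitary _ := kronecker_mem_unitary (Unitary.star_mem hV) hV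
    rw [mem_unitaryGroup_iff, star_eq_conjTranspose, conjTranspose_submatrix,
      ← Equiv.coe_prodComm, submatrix_mul_equiv, submatrix_id_id]
    exact Unitary.mul_star_self_of_mem hVV
  · have hscale : (1 / Real.sqrt d : ℂ) * star (1 / Real.sqrt d : ℂ) = ((d : ℝ)⁻¹ : ℝ) := by
      rw [one_div, star_inv₀, Complex.star_def, Complex.conj_ofReal, ← mul_inv,
        ← Complex.ofReal_mul, Real.mul_self_sqrt (Nat.cast_nonneg d), Complex.ofReal_inv,
        Complex.ofReal_natCast]
    ext p q
    simp only [PT, vecMulVec_apply, Pi.star_apply, star_mul', Matrix.smul_apply, submatrix_apply,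
      kroneckerMap_apply, id_eq, Prod.fst_swap, Prod.snd_swap, conjTranspose_apply,
      Complex.real_smul]
    linear_combination (V p.2 q.1 * star (V q.2 p.1)) * hscale

theorem re_trace_mul_vecMulVec_le_of_isMaxEnt {d : ℕ}
    {Q : Matrix (Fin d × Fin d) (Fin d × Fin d) ℂ} {u : Fin d × Fin d → ℂ}
    (hQ : (PT Q).PosSemidef) (hu : IsMaxEnt u) :
    (Q * vecMulVec u (star u)).trace.re ≤ (d : ℝ)⁻¹ * Q.trace.re := by
  obtain ⟨W, hW, hPT⟩ := hu.exists_PT_vecMulVec_eq_smul_unitary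
  calc (Q * vecMulVec u (star u)).trace.re
      = (d : ℝ)⁻¹ * (PT Q * W).trace.re := by
        rw [← trace_PT_mul_PT, hPT, Matrix.mul_smul, trace_smul, Complex.smul_re, smul_eq_mul]
    _ ≤ (d : ℝ)⁻¹ * (PT Q).trace.re :=
        mul_le_mul_of_nonneg_left (hQ.re_trace_mul_le_of_mem_unitaryGroup hW) (by positivity)
    _ = (d : ℝ)⁻¹ * Q.trace.re := rfl

theorem ppt_bound_maxEnt_general {d k : ℕ}
    (ρ : Fin k → Matrix (Fin d × Fin d) (Fin d × Fin d) ℂ)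
    (hρ : ∀ j, ∃ u : Fin d × Fin d → ℂ, IsMaxEnt u ∧ ρ j = Matrix.vecMulVec u (star u))
    (P : Fin k → Matrix (Fin d × Fin d) (Fin d × Fin d) ℂ)
    (hP : ∀ j, (P j).PosSemidef) (hPT : ∀ j, (PT (P j)).PosSemidef)
    (hsum : ∑ j, P j = 1) :
    (1 / k : ℝ) * ∑ j, (Matrix.trace ((P j)ᴴ * ρ j)).re ≤ (d : ℝ) / k := by
  have hbound (j : Fin k) : ((P j)ᴴ * ρ j).trace.re ≤ (d : ℝ)⁻¹ * (P j).trace.re := by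
    obtain ⟨u, hu, hρj⟩ := hρ j
    rw [(hP j).isHermitian.eq, hρj]
    exact re_trace_mul_vecMulVec_le_of_isMaxEnt (hPT j) hu
  have htrace : ∑ j, (P j).trace.re = d * d := by
    rw [← Complex.re_sum, ← trace_sum, hsum, trace_one]
    simp
  calc (1 / k : ℝ) * ∑ j, ((P j)ᴴ * ρ j).trace.re
      ≤ (1 / k) * ∑ j, (d : ℝ)⁻¹ * (P j).trace.re := by gcongr with j; exact hbound j
    _ = d / k := by
      rw [← Finset.mul_sum, htrace, ← mul_assoc (d : ℝ)⁻¹, inv_mul_mul_self, one_div_mul_eq_div]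

/-- No PPT measurement can distinguish `k` maximally entangled states in
`ℂᵈ ⊗ ℂᵈ` with average success probability better than `d/k`. -/
theorem ppt_bound_maxEnt {d k : ℕ} (hd : 0 < d) (hk : 0 < k)
    (ρ : Fin k → Matrix (Fin d × Fin d) (Fin d × Fin d) ℂ)
    (hρ : ∀ j, ∃ u : Fin d × Fin d → ℂ, IsMaxEnt u ∧ ρ j = Matrix.vecMulVec u (star u))
    (P : Fin k → Matrix (Fin d × Fin d) (Fin d × Fin d) ℂ)
    (hP : ∀ j, (P j).PosSemidef) (hPT : ∀ j, (PT (P j)).PosSemidef)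
    (hsum : ∑ j, P j = 1) :
    (1 / k : ℝ) * ∑ j, (Matrix.trace ((P j)ᴴ * ρ j)).re ≤ (d : ℝ) / k :=
  ppt_bound_maxEnt_general ρ hρ P hP hPT hsum
end

section
/- The operator Y = (1/4)·I₁₆ − (1/2)·(ψ₂⊗ψ₁) on (ℂ²⊗ℂ²)⊗(ℂ²⊗ℂ²) satisfies Y ≥ T_A(ρⱼ) for each of the four states ρ₁ = ψ₀⊗ψ₀, ρ₂ = ψ₁⊗ψ₃, ρ₃ = ψ₂⊗ψ₃, ρ₄ = ψ₃⊗ψ₃, where T_A is the partial transpose acting on both Alice qubits (i.e., T_A(α⊗β) = T_A(α)⊗T_A(β) for the single-qubit partial transposes). Moreover Tr(Y) = 7/2. -/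
open Matrix

noncomputable def pauli : Fin 4 → Matrix (Fin 2) (Fin 2) ℂ
  | 0 => 1
  | 1 => !![0, 1; 1, 0]
  | 2 => !![0, -Complex.I; Complex.I, 0]
  | 3 => !![1, 0; 0, -1]

/-- Density operator of the Bell state `|ψᵢ⟩ = (1 ⊗ σᵢ)|ψ₀⟩`,
`|ψ₀⟩ = (|00⟩+|11⟩)/√2`, as a matrix on `ℂ² ⊗ ℂ²`. -/
noncomputable def bell (i : Fin 4) :
    Matrix (Fin 2 × Fin 2) (Fin 2 × Fin 2) ℂ :=
  fun p q => (1 / 2 : ℂ) * pauli i p.2 p.1 * (starRingEnd ℂ) (pauli i q.2 q.1)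

open Kronecker
open scoped ComplexOrder

/-- Partial transpose on both of Alice's qubits, acting factorwise on
`(ℂ²⊗ℂ²) ⊗ (ℂ²⊗ℂ²)`. -/
def PT2 (X : Matrix ((Fin 2 × Fin 2) × (Fin 2 × Fin 2))
    ((Fin 2 × Fin 2) × (Fin 2 × Fin 2)) ℂ) :
    Matrix ((Fin 2 × Fin 2) × (Fin 2 × Fin 2)) ((Fin 2 × Fin 2) × (Fin 2 × Fin 2)) ℂ :=
  fun p q => X ((q.1.1, p.1.2), (q.2.1, p.2.2)) ((p.1.1, q.1.2), (p.2.1, q.2.2))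

/-- The four states of Yu–Duan–Ying's example. -/
noncomputable def ydy : Fin 4 → Matrix ((Fin 2 × Fin 2) × (Fin 2 × Fin 2))
    ((Fin 2 × Fin 2) × (Fin 2 × Fin 2)) ℂ
  | 0 => bell 0 ⊗ₖ bell 0
  | 1 => bell 1 ⊗ₖ bell 3
  | 2 => bell 2 ⊗ₖ bell 3
  | 3 => bell 3 ⊗ₖ bell 3

/-!
All operators involved are Bell-diagonal: `∑ₐ ψₐ = 1` and `T_A(ψᵢ) = ½·1 − ψᵢ₊₂` (indices mod 4).
For `Y = ¼·1 − ½·ψₐ₀ ⊗ ψ_b₀` the weight of `ψₐ ⊗ ψ_b` in `Y − T_A(ψᵢ ⊗ ψₖ)` is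
`½·[exactly one of a = i + 2, b = k + 2] − ½·[(a, b) = (a₀, b₀)]`,
which is nonnegative for all `(a, b)` once `(a₀, b₀)` itself satisfies exactly one of the two
equations; for `(a₀, b₀) = (2, 1)` this holds for all four states. A nonnegative combination of
the projectors `ψₐ ⊗ ψ_b` is positive semidefinite.
-/

section BellDiagonal

local notation "Op₂" => Matrix (Fin 2 × Fin 2) (Fin 2 × Fin 2) ℂ
local notation "Op₄" =>
  Matrix ((Fin 2 × Fin 2) × (Fin 2 × Fin 2)) ((Fin 2 × Fin 2) × (Fin 2 × Fin 2)) ℂ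

lemma bell_eq_smul_vecMulVec (i : Fin 4) :
    bell i =
      (1 / 2 : ℂ) • vecMulVec (fun p => pauli i p.2 p.1) (star fun p => pauli i p.2 p.1) := by
  ext p q
  simp [bell, vecMulVec_apply, mul_assoc]

lemma bell_posSemidef (i : Fin 4) : (bell i).PosSemidef := by
  rw [bell_eq_smul_vecMulVec]
  exact (posSemidef_vecMulVec_self_star _).smul (by positivity)

lemma sum_bell : ∑ i, bell i = 1 := by
  ext p q
  simp only [Fin.sum_univ_four, Matrix.add_apply]
  fin_cases p <;> fin_cases q <;>
    norm_num [bell, pauli, Matrix.one_apply, Complex.ext_iff, Prod.ext_iff]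

lemma trace_bell (i : Fin 4) : (bell i).trace = 1 := by
  fin_cases i <;>
    norm_num [Matrix.trace, bell, pauli, Fintype.sum_prod_type, Complex.ext_iff]

lemma PT_bell (i : Fin 4) : PT (bell i) = (1 / 2 : ℂ) • 1 - bell (i + 2) := by
  fin_cases i <;> simp only [Fin.isValue, Fin.reduceAdd, Fin.reduceFinMk] <;>
    ext p q <;> fin_cases p <;> fin_cases q <;>
    norm_num [bell, pauli, PT, Matrix.one_apply, Complex.ext_iff, Prod.ext_iff]

lemma PT2_kronecker (A B : Op₂) : PT2 (A ⊗ₖ B) = PT A ⊗ₖ PT B := rfl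

noncomputable def bellSum : (Fin 4 → ℝ) →ₗ[ℝ] Op₂ := Fintype.linearCombination ℝ bell

noncomputable def bellDiag : (Fin 4 × Fin 4 → ℝ) →ₗ[ℝ] Op₄ :=
  Fintype.linearCombination ℝ fun ab => bell ab.1 ⊗ₖ bell ab.2

lemma bellSum_one : bellSum 1 = 1 := by
  simp [bellSum, Fintype.linearCombination_apply, sum_bell]

lemma bellSum_single (j : Fin 4) : bellSum (Pi.single j 1) = bell j := by
  simp [bellSum]

lemma PT_bell_eq_bellSum (i : Fin 4) :
    PT (bell i) = bellSum ((1 / 2 : ℝ) • 1 - Pi.single (i + 2) 1) := by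
  rw [PT_bell, map_sub, map_smul, bellSum_one, bellSum_single, ← Complex.coe_smul]
  norm_num

lemma bellSum_kronecker_bellSum (f g : Fin 4 → ℝ) :
    bellSum f ⊗ₖ bellSum g = bellDiag fun ab => f ab.1 * g ab.2 := by
  simp only [bellSum, bellDiag, Fintype.linearCombination_apply, Fintype.sum_prod_type]
  ext p q
  simp only [kroneckerMap_apply, Matrix.sum_apply, Matrix.smul_apply, Finset.sum_mul_sum]
  refine Finset.sum_congr rfl fun a _ => Finset.sum_congr rfl fun b _ => ?_
  simp only [Complex.real_smul, Complex.ofReal_mul]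
  ring

lemma bellDiag_posSemidef {c : Fin 4 × Fin 4 → ℝ} (hc : ∀ ab, 0 ≤ c ab) :
    (bellDiag c).PosSemidef :=
  posSemidef_sum _ fun ab _ =>
    ((bell_posSemidef ab.1).kronecker (bell_posSemidef ab.2)).smul (hc ab)

lemma bellDiag_one : bellDiag 1 = 1 := by
  rw [← one_kronecker_one, ← bellSum_one, bellSum_kronecker_bellSum]
  simp only [Pi.one_apply, mul_one]
  rfl

noncomputable def dualOp (a₀ b₀ : Fin 4) : Op₄ :=
  (1 / 4 : ℂ) • 1 - (1 / 2 : ℂ) • (bell a₀ ⊗ₖ bell b₀)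

lemma dualOp_eq_bellDiag (a₀ b₀ : Fin 4) :
    dualOp a₀ b₀ = bellDiag ((1 / 4 : ℝ) • 1 - (1 / 2 : ℝ) • fun ab =>
      (Pi.single a₀ 1 : Fin 4 → ℝ) ab.1 * (Pi.single b₀ 1 : Fin 4 → ℝ) ab.2) := by
  rw [map_sub, map_smul, map_smul, bellDiag_one, ← bellSum_kronecker_bellSum, bellSum_single,
    bellSum_single, dualOp, ← Complex.coe_smul, ← Complex.coe_smul]
  norm_num

lemma PT2_bell_kronecker_eq_bellDiag (i k : Fin 4) :
    PT2 (bell i ⊗ₖ bell k) = bellDiag fun ab =>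
      (1 / 2 - (Pi.single (i + 2) 1 : Fin 4 → ℝ) ab.1) *
        (1 / 2 - (Pi.single (k + 2) 1 : Fin 4 → ℝ) ab.2) := by
  rw [PT2_kronecker, PT_bell_eq_bellSum, PT_bell_eq_bellSum, bellSum_kronecker_bellSum]
  simp only [Pi.sub_apply, Pi.smul_apply, Pi.one_apply, smul_eq_mul, mul_one]

lemma dualOp_sub_PT2_posSemidef {a₀ b₀ i k : Fin 4} (h : Xor (a₀ = i + 2) (b₀ = k + 2)) :
    (dualOp a₀ b₀ - PT2 (bell i ⊗ₖ bell k)).PosSemidef := by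
  rw [dualOp_eq_bellDiag, PT2_bell_kronecker_eq_bellDiag, ← map_sub]
  refine bellDiag_posSemidef fun ⟨a, b⟩ => ?_
  simp only [Pi.sub_apply, Pi.smul_apply, Pi.one_apply, Pi.single_apply, smul_eq_mul]
  split_ifs <;> subst_vars <;> simp_all <;> norm_num

end BellDiagonal

/-- The dual feasible operator `Y = (1/4)·1 − (1/2)·(ψ₂⊗ψ₁)` dominates the
partial transposes of the four states, and has trace `7/2`. -/
theorem ydy_dual_feasible :
    (∀ j : Fin 4,
      ((1 / 4 : ℂ) • (1 : Matrix ((Fin 2 × Fin 2) × (Fin 2 × Fin 2))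
          ((Fin 2 × Fin 2) × (Fin 2 × Fin 2)) ℂ)
        - (1 / 2 : ℂ) • (bell 2 ⊗ₖ bell 1) - PT2 (ydy j)).PosSemidef) ∧
    Matrix.trace ((1 / 4 : ℂ) • (1 : Matrix ((Fin 2 × Fin 2) × (Fin 2 × Fin 2))
          ((Fin 2 × Fin 2) × (Fin 2 × Fin 2)) ℂ)
        - (1 / 2 : ℂ) • (bell 2 ⊗ₖ bell 1)) = 7 / 2 := by
  refine ⟨fun j => ?_, ?_⟩
  · fin_cases j <;> exact dualOp_sub_PT2_posSemidef (by decide)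
  · rw [Matrix.trace_sub, Matrix.trace_smul, Matrix.trace_smul, Matrix.trace_one,
      Matrix.trace_kronecker, trace_bell, trace_bell]
    norm_num
end
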